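/- Let A be a unital complex C*-algebra and let a ∈ A be selfadjoint. Let f : ℝ → ℂ be a bounded continuous integrable function whose Fourier transform f̂ is integrable. Then the function p ↦ f̂(p)·exp(i·p·a) is Bochner integrable from ℝ to A and f(a) = (2π)^{−1/2} · ∫_ℝ f̂(p)·exp(i·p·a) dp, where f(a) denotes the continuous functional calculus of a applied to f (using that the spectrum of a is contained in ℝ). -/

import Mathlib

/-!
On the spectrum of a selfadjoint `a`, which is real, Fourier inversion writes `f` as the integral
of the continuous functions `z ↦ f̂(p) e^{ipz}`, dominated by `|f̂(p)|`. The continuous functional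
calculus commutes with such integrals and sends `e^{ipz}` to `exp (ip • a)`.
-/

open MeasureTheory

noncomputable def fourierHat (f : ℝ → ℂ) (p : ℝ) : ℂ :=
  (Real.sqrt (2 * Real.pi) : ℂ)⁻¹ * ∫ x : ℝ, f x * Complex.exp (-(Complex.I * x * p))

open Real Complex FourierTransform

lemma ofReal_sqrt_two_pi_ne_zero : (√(2 * π) : ℂ) ≠ 0 := by
  exact_mod_cast (Real.sqrt_pos.2 (by positivity)).ne'

lemma fourierHat_eq_fourier (f : ℝ → ℂ) (p : ℝ) :
    fourierHat f p = (√(2 * π) : ℂ)⁻¹ * 𝓕 f ((2 * π)⁻¹ * p) := by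
  rw [fourierHat, Real.fourier_real_eq_integral_exp_smul]
  congr 2 with x
  rw [smul_eq_mul, mul_comm]
  congr 2
  push_cast
  field_simp

lemma continuous_fourierHat {f : ℝ → ℂ} (hf : Integrable f) : Continuous (fourierHat f) := by
  have : Continuous (𝓕 f) :=
    VectorFourier.fourierIntegral_continuous Real.continuous_fourierChar
      (innerSL ℝ).continuous₂ hf
  simp_rw [funext (fourierHat_eq_fourier f)]
  fun_prop

lemma integrable_fourier_of_integrable_fourierHat {f : ℝ → ℂ}
    (hf : Integrable (fourierHat f)) : Integrable (𝓕 f) := by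
  have h := (hf.comp_mul_left' (R := 2 * π) (by positivity)).const_mul (√(2 * π) : ℂ)
  convert h using 2 with ξ
  rw [fourierHat_eq_fourier, inv_mul_cancel_left₀ (by positivity), ← mul_assoc,
    mul_inv_cancel₀ ofReal_sqrt_two_pi_ne_zero, one_mul]

lemma integral_fourierHat_mul_cexp_eq_fourierInv (f : ℝ → ℂ) (x : ℝ) :
    ∫ p : ℝ, fourierHat f p * cexp (p * I * x) = √(2 * π) * 𝓕⁻ (𝓕 f) x := by
  set G : ℝ → ℂ := fun ξ ↦ cexp (↑(2 * π * inner ℝ ξ x) * I) • 𝓕 f ξ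
  have hG (p : ℝ) :
      fourierHat f p * cexp (p * I * x) = (√(2 * π) : ℂ)⁻¹ * G ((2 * π)⁻¹ * p) := by
    simp only [G, fourierHat_eq_fourier, smul_eq_mul, RCLike.inner_apply, conj_trivial]
    push_cast
    field_simp
  have hsq : ((2 * π : ℝ) : ℂ) = √(2 * π) * √(2 * π) := by
    exact_mod_cast (Real.mul_self_sqrt (by positivity)).symm
  rw [integral_congr_ae (.of_forall hG), integral_const_mul, Measure.integral_comp_mul_left,
    fourierInv_eq', inv_inv, abs_of_pos (by positivity), Complex.real_smul, hsq, ← mul_assoc,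
    inv_mul_cancel_left₀ ofReal_sqrt_two_pi_ne_zero]

lemma Continuous.integral_fourierHat_mul_cexp {f : ℝ → ℂ} (hf_cont : Continuous f)
    (hf_int : Integrable f) (hfhat_int : Integrable (fourierHat f)) (x : ℝ) :
    ∫ p : ℝ, fourierHat f p * cexp (p * I * x) = √(2 * π) * f x := by
  rw [integral_fourierHat_mul_cexp_eq_fourierInv,
    hf_cont.fourierInv_fourier_eq hf_int (integrable_fourier_of_integrable_fourierHat hfhat_int)]

section CStarAlgebra

variable {A : Type*} [CStarAlgebra A]

lemma cfc_const_mul_cexp_const_mul (c d : ℂ) (a : A) [IsStarNormal a] :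
    cfc (fun z ↦ c * cexp (d * z)) a = c • NormedSpace.exp (d • a) := by
  rw [cfc_const_mul .., cfc_comp_const_mul .., CFC.complex_exp_eq_normedSpace_exp]

lemma IsSelfAdjoint.norm_cexp_ofReal_mul_I_mul {a : A} (ha : IsSelfAdjoint a) (p : ℝ) {z : ℂ}
    (hz : z ∈ spectrum ℂ a) : ‖cexp (p * I * z)‖ = 1 := by
  rw [ha.mem_spectrum_eq_re hz, norm_exp]
  simp

namespace IsSelfAdjoint

variable {a : A} (ha : IsSelfAdjoint a) {g : ℝ → ℂ} (hg : Continuous g) (hg_int : Integrable g)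
include ha hg hg_int

lemma integrable_smul_exp_ofReal_mul_I_smul :
    Integrable (fun p : ℝ ↦ g p • NormedSpace.exp ((p * I : ℂ) • a)) := by
  have := ha.isStarNormal
  simp_rw [← cfc_const_mul_cexp_const_mul]
  refine integrable_cfc _ (‖g ·‖) a (by fun_prop) (.of_forall fun p z hz ↦ ?_) hg_int.norm.2
  rw [norm_mul, ha.norm_cexp_ofReal_mul_I_mul p hz, mul_one]

lemma cfc_integral_mul_cexp_ofReal_mul_I :
    cfc (fun z ↦ ∫ p : ℝ, g p * cexp (p * I * z)) a
      = ∫ p : ℝ, g p • NormedSpace.exp ((p * I : ℂ) • a) := by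
  have := ha.isStarNormal
  simp_rw [← cfc_const_mul_cexp_const_mul]
  refine cfc_integral _ (‖g ·‖) a (by fun_prop) (.of_forall fun p z hz ↦ ?_) hg_int.norm.2
  rw [norm_mul, ha.norm_cexp_ofReal_mul_I_mul p hz, mul_one]

end IsSelfAdjoint

end CStarAlgebra

theorem cfc_eq_fourier_integral
    {A : Type*} [CStarAlgebra A] (a : A) (ha : IsSelfAdjoint a)
    (f : ℝ → ℂ) (hf_cont : Continuous f)
    (hf_int : Integrable f) (hfhat_int : Integrable (fourierHat f)) :
    Integrable (fun p : ℝ =>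
      fourierHat f p • NormedSpace.exp (((p : ℂ) * Complex.I) • a)) ∧
    cfc (fun z : ℂ => f z.re) a
      = (Real.sqrt (2 * Real.pi))⁻¹ •
          ∫ p : ℝ, fourierHat f p • NormedSpace.exp (((p : ℂ) * Complex.I) • a) := by
  have hfhat_cont := continuous_fourierHat hf_int
  have hinv : (spectrum ℂ a).EqOn (fun z ↦ ∫ p : ℝ, fourierHat f p * cexp (p * I * z))
      (fun z ↦ √(2 * π) * f z.re) := fun z hz ↦ by
    dsimp only
    rw [ha.mem_spectrum_eq_re hz, ofReal_re,
      hf_cont.integral_fourierHat_mul_cexp hf_int hfhat_int]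
  refine ⟨ha.integrable_smul_exp_ofReal_mul_I_smul hfhat_cont hfhat_int, ?_⟩
  rw [← ha.cfc_integral_mul_cexp_ofReal_mul_I hfhat_cont hfhat_int, cfc_congr hinv,
    cfc_const_mul .., Complex.coe_smul, inv_smul_smul₀ (by positivity)]
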